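/- arXiv:1403.1630 — 4 statements merged into one kernel-verified Lean document; each statement's English description precedes it below -/
import Mathlib

section
/- For any function f of bounded variation on [0,1] that is symmetric around 1/2 (i.e., f(1/2 - y) = f(1/2 + y) for all y in [0,1/2]), and for any points x_1, ..., x_N in [0,1], we have |∫_0^1 f(x) dx - (1/N) Σ_{k=1}^N f(x_k)| ≤ (Var f / 2) · D_N(x_1, ..., x_N). -/
open MeasureTheory Set

/-- The extremal discrepancy of points `x 0, …, x (N-1)`. -/
noncomputable def discrepancy {N : ℕ} (x : Fin N → ℝ) : ℝ :=
  ⨆ p : {p : ℝ × ℝ // 0 ≤ p.1 ∧ p.1 ≤ p.2 ∧ p.2 ≤ 1},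
    |(∑ k, if x k ∈ Icc p.val.1 p.val.2 then (1:ℝ) else 0) / N - (p.val.2 - p.val.1)|

/-!
On `[0,1]` write `f = g ∘ φ - h ∘ φ`, where `φ t = max t (1 - t)` folds `[0,1]` onto `[1/2,1]`
(this is where the symmetry of `f` enters) and `g`, `h` are monotone with total increase
`Var_[1/2,1] f = Var f / 2`. For monotone `G`, each superlevel set of `G ∘ φ` in `[0,1]` is the
complement of an open or closed interval centred at `1/2`, so Lebesgue measure and the empirical
measure of the points differ on it by at most `D_N`; integrating over the levels (layer cake
formula) bounds the integration error of `G ∘ φ` by `(G 1 - G (1/2)) D_N`.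
-/

open scoped ENNReal

theorem antitone_measureReal_setOf_le {α : Type*} [MeasurableSpace α] (μ : Measure α)
    [IsFiniteMeasure μ] (ψ : α → ℝ) : Antitone fun t => μ.real {a | t ≤ ψ a} :=
  fun _ _ hst => measureReal_mono fun _ ha => hst.trans ha

theorem abs_integral_sub_integral_le_of_abs_measureReal_sub_le {α : Type*} [MeasurableSpace α]
    {μ ν : Measure α} [IsProbabilityMeasure μ] [IsProbabilityMeasure ν] {ψ : α → ℝ} {m M D : ℝ}
    (hψ : Measurable ψ) (hμ : ∀ᵐ a ∂μ, ψ a ∈ Icc m M) (hν : ∀ᵐ a ∂ν, ψ a ∈ Icc m M)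
    (hD : ∀ s, |μ.real {a | s ≤ ψ a} - ν.real {a | s ≤ ψ a}| ≤ D) :
    |∫ a, ψ a ∂μ - ∫ a, ψ a ∂ν| ≤ (M - m) * D := by
  obtain ⟨_, hmM⟩ := hμ.exists
  have hL : 0 ≤ M - m := sub_nonneg.2 (hmM.1.trans hmM.2)
  -- Shift `ψ` by `m` so that the layer cake formula applies on `(0, M - m]`.
  have layer_cake : ∀ (ρ : Measure α) [IsProbabilityMeasure ρ], (∀ᵐ a ∂ρ, ψ a ∈ Icc m M) →
      ∫ a, ψ a ∂ρ = m + ∫ s in Ioc 0 (M - m), ρ.real {a | s + m ≤ ψ a} := by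
    intro ρ _ hρ
    have hψρ : Integrable ψ ρ := .of_mem_Icc m M hψ.aemeasurable hρ
    have := (hψρ.sub (integrable_const m)).integral_eq_integral_Ioc_meas_le (M := M - m)
      (hρ.mono fun a ha => sub_nonneg.2 ha.1) (hρ.mono fun a ha => sub_le_sub_right ha.2 m)
    simp only [Pi.sub_apply, le_sub_iff_add_le] at this
    rw [← this, integral_sub hψρ (integrable_const m), integral_const, probReal_univ]
    ring
  have hint : ∀ (ρ : Measure α) [IsProbabilityMeasure ρ],
      IntegrableOn (fun s => ρ.real {a | s + m ≤ ψ a}) (Ioc 0 (M - m)) := fun ρ _ =>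
    Integrable.of_bound
      ((antitone_measureReal_setOf_le ρ ψ).comp_monotone (monotone_id.add_const m)
        |>.measurable.aestronglyMeasurable) 1
      (Filter.Eventually.of_forall fun s => by
        rw [Real.norm_eq_abs, abs_of_nonneg measureReal_nonneg]; exact measureReal_le_one)
  rw [layer_cake μ hμ, layer_cake ν hν, add_sub_add_left_eq_sub, ← integral_sub (hint μ) (hint ν),
    mul_comm]
  simpa [hL] using norm_setIntegral_le_of_norm_le_const (μ := volume) (s := Ioc 0 (M - m))
    (f := fun s => μ.real {a | s + m ≤ ψ a} - ν.real {a | s + m ≤ ψ a})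
    measure_Ioc_lt_top fun s _ => hD (s + m)

noncomputable def empiricalMeasure {α : Type*} [MeasurableSpace α] {N : ℕ} (x : Fin N → α) :
    Measure α :=
  (N : ℝ≥0∞)⁻¹ • ∑ k, Measure.dirac (x k)

section empiricalMeasure

variable {α : Type*} [MeasurableSpace α] {N : ℕ} (x : Fin N → α)

instance [NeZero N] : IsProbabilityMeasure (empiricalMeasure x) :=
  ⟨by simp [empiricalMeasure, ENNReal.inv_mul_cancel (NeZero.ne (N : ℝ≥0∞))]⟩

theorem empiricalMeasure_real_apply [MeasurableSingletonClass α] (s : Set α)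
    [DecidablePred (· ∈ s)] :
    (empiricalMeasure x).real s = (∑ k, if x k ∈ s then (1 : ℝ) else 0) / N := by
  simp [empiricalMeasure, Measure.real, Measure.dirac_apply, indicator_apply, div_eq_inv_mul]

theorem integral_empiricalMeasure [MeasurableSingletonClass α] (f : α → ℝ) :
    ∫ a, f a ∂empiricalMeasure x = (∑ k, f (x k)) / N := by
  rw [empiricalMeasure, integral_smul_measure,
    integral_finsetSum_measure fun k _ => integrable_dirac enorm_lt_top]
  simp [integral_dirac, div_eq_inv_mul]

theorem ae_empiricalMeasure_mem [MeasurableSingletonClass α] {s : Set α} (hx : ∀ k, x k ∈ s) :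
    ∀ᵐ a ∂empiricalMeasure x, a ∈ s := by
  rw [ae_iff]
  simp [empiricalMeasure, Measure.dirac_apply, hx]

end empiricalMeasure

section discrepancy

variable {N : ℕ} [NeZero N] (x : Fin N → ℝ) {a b : ℝ}

theorem abs_empiricalMeasure_real_Icc_sub_le (ha : 0 ≤ a) (hab : a ≤ b) (hb : b ≤ 1) :
    |(empiricalMeasure x).real (Icc a b) - (b - a)| ≤ discrepancy x := by
  simp only [discrepancy, ← empiricalMeasure_real_apply]
  refine le_ciSup (f := fun p : {p : ℝ × ℝ // 0 ≤ p.1 ∧ p.1 ≤ p.2 ∧ p.2 ≤ 1} =>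
    |(empiricalMeasure x).real (Icc p.1.1 p.1.2) - (p.1.2 - p.1.1)|) ⟨1, ?_⟩ ⟨(a, b), ha, hab, hb⟩
  rintro _ ⟨⟨p, hp0, hp, hp1⟩, rfl⟩
  exact abs_sub_le_of_nonneg_of_le measureReal_nonneg measureReal_le_one (by linarith)
    (by linarith)

theorem sub_sub_discrepancy_le_empiricalMeasure_real_Ioo (ha : 0 ≤ a) (hab : a ≤ b)
    (hb : b ≤ 1) : b - a - discrepancy x ≤ (empiricalMeasure x).real (Ioo a b) := by
  refine le_of_forall_pos_le_add fun ε hε => ?_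
  rcases lt_or_ge (b - a) ε with hε' | hε'
  · linarith [(abs_nonneg _).trans (abs_empiricalMeasure_real_Icc_sub_le x ha hab hb),
      measureReal_nonneg (μ := empiricalMeasure x) (s := Ioo a b)]
  · have h := abs_empiricalMeasure_real_Icc_sub_le x (a := a + ε / 2) (b := b - ε / 2)
      (by linarith) (by linarith) (by linarith)
    have hsub : Icc (a + ε / 2) (b - ε / 2) ⊆ Ioo a b := Icc_subset_Ioo (by linarith) (by linarith)
    linarith [(abs_le.1 h).1, measureReal_mono (μ := empiricalMeasure x) hsub]

theorem abs_empiricalMeasure_real_sub_volume_real_le {J : Set ℝ} (ha : 0 ≤ a) (hab : a ≤ b)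
    (hb : b ≤ 1) (hJo : Ioo a b ⊆ J) (hJc : J ⊆ Icc a b) :
    |(empiricalMeasure x).real J - volume.real J| ≤ discrepancy x := by
  have hJ : volume J ≠ ∞ := ((measure_mono hJc).trans_lt measure_Icc_lt_top).ne
  have hvol : volume.real J = b - a := le_antisymm
    ((measureReal_mono hJc measure_Icc_lt_top.ne).trans_eq (Real.volume_real_Icc_of_le hab))
    ((Real.volume_real_Ioo_of_le hab).symm.trans_le (measureReal_mono hJo hJ))
  rw [hvol, abs_le]
  constructor
  · linarith [sub_sub_discrepancy_le_empiricalMeasure_real_Ioo x ha hab hb,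
      measureReal_mono (μ := empiricalMeasure x) hJo]
  · linarith [(abs_le.1 (abs_empiricalMeasure_real_Icc_sub_le x ha hab hb)).2,
      measureReal_mono (μ := empiricalMeasure x) hJc]

end discrepancy

section fold

theorem Monotone.exists_Ico_subset_and_subset_Icc {G : ℝ → ℝ} (hG : Monotone G) {a b : ℝ}
    (hab : a ≤ b) (s : ℝ) :
    ∃ c ∈ Icc a b, Ico a c ⊆ {u ∈ Icc a b | G u < s} ∧ {u ∈ Icc a b | G u < s} ⊆ Icc a c := by
  set T := {u ∈ Icc a b | G u < s}
  rcases T.eq_empty_or_nonempty with hT | hT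
  · exact ⟨a, left_mem_Icc.2 hab, by simp, by simp [hT]⟩
  have hbdd : BddAbove T := ⟨b, fun u hu => hu.1.2⟩
  obtain ⟨u₀, hu₀⟩ := hT
  refine ⟨sSup T, ⟨hu₀.1.1.trans (le_csSup hbdd hu₀), csSup_le ⟨u₀, hu₀⟩ fun u hu => hu.1.2⟩,
    fun u hu => ?_, fun u hu => ⟨hu.1.1, le_csSup hbdd hu⟩⟩
  obtain ⟨v, hv, huv⟩ := exists_lt_of_lt_csSup ⟨u₀, hu₀⟩ hu.2
  exact ⟨⟨hu.1, huv.le.trans hv.1.2⟩, (hG huv.le).trans_lt hv.2⟩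

theorem max_self_one_sub_mem_Icc {t : ℝ} (ht : t ∈ Icc 0 1) : max t (1 - t) ∈ Icc (1 / 2) 1 :=
  ⟨by rcases le_total t (1 - t) with h | h <;> simp [h] <;> linarith,
    max_le ht.2 (by linarith [ht.1])⟩

theorem Monotone.exists_Ioo_subset_and_subset_Icc_fold {G : ℝ → ℝ} (hG : Monotone G) (s : ℝ) :
    ∃ c ∈ Icc (1 / 2 : ℝ) 1, Ioo (1 - c) c ⊆ Icc 0 1 \ {t | s ≤ G (max t (1 - t))} ∧
      Icc 0 1 \ {t | s ≤ G (max t (1 - t))} ⊆ Icc (1 - c) c := by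
  obtain ⟨c, hc, hIco, hIcc⟩ :=
    hG.exists_Ico_subset_and_subset_Icc (a := 1 / 2) (b := 1) (by norm_num) s
  refine ⟨c, hc, fun t ht => ?_, fun t ht => ?_⟩
  · have hmax : max t (1 - t) < c := max_lt ht.2 (by linarith [ht.1])
    have ht01 : t ∈ Icc 0 1 := ⟨by linarith [ht.1, hc.2], by linarith [ht.2, hc.2]⟩
    exact ⟨ht01, not_le.2 (hIco ⟨(max_self_one_sub_mem_Icc ht01).1, hmax⟩).2⟩
  · have hmax := (hIcc ⟨max_self_one_sub_mem_Icc ht.1, not_le.1 ht.2⟩).2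
    exact ⟨by linarith [le_max_right t (1 - t)], (le_max_left t (1 - t)).trans hmax⟩

theorem measureReal_eq_one_sub_measureReal_diff {α : Type*} [MeasurableSpace α] {ρ : Measure α}
    [IsProbabilityMeasure ρ] {I S : Set α} (hS : MeasurableSet S) (hρ : ∀ᵐ a ∂ρ, a ∈ I) :
    ρ.real S = 1 - ρ.real (I \ S) := by
  have hdiff : ρ.real (I \ S) = ρ.real Sᶜ := measureReal_congr <| by
    filter_upwards [hρ] with a ha
    exact propext ⟨fun h => h.2, fun h => ⟨ha, h⟩⟩
  rw [hdiff, probReal_compl_eq_one_sub hS, sub_sub_cancel]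

variable {G : ℝ → ℝ}

theorem Monotone.measurable_comp_fold (hG : Monotone G) :
    Measurable fun t => G (max t (1 - t)) :=
  hG.measurable.comp (by fun_prop)

theorem Monotone.ae_comp_fold_mem_Icc (hG : Monotone G) {ρ : Measure ℝ}
    (hρ : ∀ᵐ t ∂ρ, t ∈ Icc 0 1) : ∀ᵐ t ∂ρ, G (max t (1 - t)) ∈ Icc (G (1 / 2)) (G 1) := by
  filter_upwards [hρ] with t ht
  exact ⟨hG (max_self_one_sub_mem_Icc ht).1, hG (max_self_one_sub_mem_Icc ht).2⟩

theorem Monotone.integrable_comp_fold (hG : Monotone G) {ρ : Measure ℝ} [IsFiniteMeasure ρ]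
    (hρ : ∀ᵐ t ∂ρ, t ∈ Icc 0 1) : Integrable (fun t => G (max t (1 - t))) ρ :=
  .of_mem_Icc _ _ hG.measurable_comp_fold.aemeasurable (hG.ae_comp_fold_mem_Icc hρ)

instance : IsProbabilityMeasure (volume.restrict (Icc (0 : ℝ) 1)) := ⟨by simp⟩

variable {N : ℕ} [NeZero N] {x : Fin N → ℝ}

theorem Monotone.abs_measureReal_setOf_le_fold_sub_le (hG : Monotone G)
    (hx : ∀ k, x k ∈ Icc 0 1) (s : ℝ) :
    |(volume.restrict (Icc 0 1)).real {t | s ≤ G (max t (1 - t))} -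
      (empiricalMeasure x).real {t | s ≤ G (max t (1 - t))}| ≤ discrepancy x := by
  obtain ⟨c, hc, hJo, hJc⟩ := hG.exists_Ioo_subset_and_subset_Icc_fold s
  have hS : MeasurableSet {t | s ≤ G (max t (1 - t))} :=
    hG.measurable_comp_fold measurableSet_Ici
  rw [measureReal_eq_one_sub_measureReal_diff hS (ae_restrict_mem measurableSet_Icc),
    measureReal_eq_one_sub_measureReal_diff hS (ae_empiricalMeasure_mem x hx),
    measureReal_restrict_apply (measurableSet_Icc.diff hS), inter_eq_left.2 sdiff_subset,
    sub_sub_sub_cancel_left]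
  exact abs_empiricalMeasure_real_sub_volume_real_le x (by linarith [hc.2]) (by linarith [hc.1])
    hc.2 hJo hJc

theorem Monotone.abs_integral_comp_fold_sub_le (hG : Monotone G) (hx : ∀ k, x k ∈ Icc 0 1) :
    |(∫ t in Icc 0 1, G (max t (1 - t))) - ∫ t, G (max t (1 - t)) ∂empiricalMeasure x| ≤
      (G 1 - G (1 / 2)) * discrepancy x :=
  abs_integral_sub_integral_le_of_abs_measureReal_sub_le hG.measurable_comp_fold
    (hG.ae_comp_fold_mem_Icc (ae_restrict_mem measurableSet_Icc))
    (hG.ae_comp_fold_mem_Icc (ae_empiricalMeasure_mem x hx))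
    (hG.abs_measureReal_setOf_le_fold_sub_le hx)

end fold

theorem max_self_one_sub_eq_of_symm {E : Type*} {f : ℝ → E}
    (hf : ∀ y ∈ Icc (0 : ℝ) (1 / 2), f (1 / 2 - y) = f (1 / 2 + y)) {t : ℝ} (ht : t ∈ Icc 0 1) :
    f (max t (1 - t)) = f t := by
  rcases max_choice t (1 - t) with hmax | hmax
  · rw [hmax]
  · have hy := hf (1 / 2 - t) ⟨by linarith [le_max_left t (1 - t)], by linarith [ht.1]⟩
    rw [sub_sub_cancel, show (1 / 2 : ℝ) + (1 / 2 - t) = 1 - t by ring] at hy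
    rw [hmax, hy]

theorem eVariationOn_Icc_eq_two_mul_of_symm {E : Type*} [PseudoEMetricSpace E] {f : ℝ → E}
    {c r : ℝ} (hr : 0 ≤ r) (hf : ∀ y ∈ Icc 0 r, f (c - y) = f (c + y)) :
    eVariationOn f (Icc (c - r) (c + r)) = 2 * eVariationOn f (Icc c (c + r)) := by
  have hreflect : (fun t => 2 * c - t) '' Icc c (c + r) = Icc (c - r) c := by
    rw [image_const_sub_Icc]; congr 1 <;> ring
  have hleft : eVariationOn f (Icc (c - r) c) = eVariationOn f (Icc c (c + r)) := by
    rw [← hreflect, ← eVariationOn.comp_eq_of_antitoneOn f _ fun s _ t _ hst => by linarith]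
    refine eVariationOn.eq_of_eqOn fun t ht => ?_
    have hy := hf (t - c) ⟨by linarith [ht.1], by linarith [ht.2]⟩
    rwa [show c - (t - c) = 2 * c - t by ring, add_sub_cancel] at hy
  have hsplit := eVariationOn.Icc_add_Icc f (s := univ) (a := c - r) (b := c) (c := c + r)
    (by linarith) (by linarith) (mem_univ _)
  simp only [univ_inter] at hsplit
  rw [← hsplit, hleft, two_mul]

theorem BoundedVariationOn.exists_monotone_sub_monotone_Icc {α : Type*} [LinearOrder α]
    {f : α → ℝ} {a b : α} (hab : a ≤ b) (hf : BoundedVariationOn f (Icc a b)) :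
    ∃ g h : α → ℝ, Monotone g ∧ Monotone h ∧ EqOn f (g - h) (Icc a b) ∧
      (g b - g a) + (h b - h a) = (eVariationOn f (Icc a b)).toReal := by
  -- Halves of `V + f` and `V - f`, `V` the variation from `a`: unlike for the pair `V`, `V - f`,
  -- their increments sum to `V b` rather than to `2 V b - (f b - f a)`.
  have ha : a ∈ Icc a b := left_mem_Icc.2 hab
  have hmono : ∀ φ : α → ℝ, MonotoneOn φ (Icc a b) →
      Monotone (IccExtend hab fun u => φ u / 2) := fun φ hφ =>
    Monotone.IccExtend hab fun u w huw => div_le_div_of_nonneg_right (hφ u.2 w.2 huw) two_pos.le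
  refine ⟨_, _, hmono _ (variationOnFromTo.add_self_monotoneOn hf.locallyBoundedVariationOn ha),
    hmono _ (variationOnFromTo.sub_self_monotoneOn hf.locallyBoundedVariationOn ha),
    fun t ht => ?_, ?_⟩
  · simp only [IccExtend_of_mem hab _ ht, Pi.add_apply, Pi.sub_apply]
    ring
  · simp only [IccExtend_left, IccExtend_right, Pi.add_apply, Pi.sub_apply]
    rw [variationOnFromTo.self, variationOnFromTo.eq_of_le f _ hab, inter_self]
    ring

/-- Symmetric version of Koksma's inequality. -/
theorem symmetric_koksma {N : ℕ} (hN : 0 < N) (f : ℝ → ℝ)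
    (hBV : BoundedVariationOn f (Icc 0 1))
    (hsym : ∀ y ∈ Icc (0:ℝ) (1/2), f (1/2 - y) = f (1/2 + y))
    (x : Fin N → ℝ) (hx : ∀ k, x k ∈ Icc (0:ℝ) 1) :
    |(∫ t in (0:ℝ)..1, f t) - (∑ k, f (x k)) / N| ≤
      (eVariationOn f (Icc 0 1)).toReal / 2 * discrepancy x := by
  have : NeZero N := ⟨hN.ne'⟩
  obtain ⟨g, h, hg, hh, hfgh, hvar⟩ :=
    (hBV.mono (Icc_subset_Icc (by norm_num) le_rfl)).exists_monotone_sub_monotone_Icc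
      (by norm_num : (1 / 2 : ℝ) ≤ 1)
  have hfold : ∀ t ∈ Icc (0 : ℝ) 1, f t = g (max t (1 - t)) - h (max t (1 - t)) := fun t ht => by
    rw [← max_self_one_sub_eq_of_symm hsym ht]
    exact hfgh (max_self_one_sub_mem_Icc ht)
  have hvar_half : (eVariationOn f (Icc (1 / 2) 1)).toReal =
      (eVariationOn f (Icc 0 1)).toReal / 2 := by
    have h2 := eVariationOn_Icc_eq_two_mul_of_symm (by norm_num : (0 : ℝ) ≤ 1 / 2) hsym
    norm_num at h2
    rw [h2, ENNReal.toReal_mul]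
    norm_num
  have hμ : ∀ᵐ t ∂volume.restrict (Icc (0 : ℝ) 1), t ∈ Icc 0 1 :=
    ae_restrict_mem measurableSet_Icc
  have hν := ae_empiricalMeasure_mem x hx
  rw [intervalIntegral.integral_of_le zero_le_one, ← integral_Icc_eq_integral_Ioc,
    ← integral_empiricalMeasure, setIntegral_congr_fun measurableSet_Icc hfold,
    integral_congr_ae (hν.mono hfold),
    integral_sub (hg.integrable_comp_fold hμ) (hh.integrable_comp_fold hμ),
    integral_sub (hg.integrable_comp_fold hν) (hh.integrable_comp_fold hν)]
  calc _ ≤ _ := by simpa only [Real.dist_eq] using dist_sub_sub_le (E := ℝ) _ _ _ _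
    _ ≤ (g 1 - g (1 / 2)) * discrepancy x + (h 1 - h (1 / 2)) * discrepancy x :=
      add_le_add (hg.abs_integral_comp_fold_sub_le hx) (hh.abs_integral_comp_fold_sub_le hx)
    _ = _ := by rw [← add_mul, hvar, hvar_half]
end

section
/- Let n_1, ..., n_N be distinct positive integers and let z ∈ (0,1) be fixed. Then ∫_0^1 ∫_0^1 (Σ_{k=1}^N I_{[a,a+z]}(n_k x))^2 dx da = z(1-z)N, where I_{[a,a+z]}(y) = Σ_{m∈ℤ} 1_{[a,a+z]}(y+m) - z is the centered 1-periodic indicator function of the interval [a, a+z]. -/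
/-!
Expanding the square and integrating in `a` first turns each cross term into the
autocorrelation `K t = ∫₀¹ f b * f (b + t) db` of the 1-periodic function `f = I_{[0,z]}`, evaluated
at `(n_j - n_k) x`. Since `K` is 1-periodic with `∫₀¹ K = (∫₀¹ f)² = 0`, and `x ↦ m x` wraps
`[0,1]` exactly `|m|` times around the circle, `∫₀¹ K (m x) dx = 0` for every nonzero integer `m`.
Injectivity of `n` leaves only the `N` diagonal terms `K 0 = ∫₀¹ f² = z (1 - z)`.
-/

open MeasureTheory Set

/-- The centered 1-periodic indicator function of the interval `[a, a+z]` (of length `z < 1`),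
`I_{[a,a+z]}(x) = ∑_{m ∈ ℤ} 1_{[a,a+z]}(x+m) - z`. -/
noncomputable def centeredInd (a z x : ℝ) : ℝ :=
  (if Int.fract (x - a) ≤ z then 1 else 0) - z

open Function

lemma intervalIntegrable_of_abs_le {g : ℝ → ℝ} (hg : Measurable g) {C : ℝ}
    (hC : ∀ t, |g t| ≤ C) (a b : ℝ) : IntervalIntegrable g volume a b := by
  rw [intervalIntegrable_iff]
  exact IntegrableOn.of_bound measure_Ioc_lt_top hg.aestronglyMeasurable C
    (.of_forall fun t => (Real.norm_eq_abs _).trans_le (hC t))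

lemma intervalIntegral_integral_swap_of_abs_le {F : ℝ → ℝ → ℝ} (hF : Measurable (uncurry F))
    {C : ℝ} (hC : ∀ a x, |F a x| ≤ C) (a₁ a₂ x₁ x₂ : ℝ) :
    ∫ a in a₁..a₂, ∫ x in x₁..x₂, F a x = ∫ x in x₁..x₂, ∫ a in a₁..a₂, F a x := by
  simp only [intervalIntegral.intervalIntegral_eq_integral_uIoc, integral_smul]
  have (c d : ℝ) : IsFiniteMeasure (volume.restrict (uIoc c d)) :=
    isFiniteMeasure_restrict.mpr measure_Ioc_lt_top.ne
  rw [smul_comm, integral_integral_swap]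
  exact Integrable.of_bound hF.aestronglyMeasurable C
    (.of_forall fun p => (Real.norm_eq_abs _).trans_le (hC p.1 p.2))

lemma Function.Periodic.intervalIntegral_comp_int_mul {g : ℝ → ℝ} (hg : Periodic g 1)
    (hint : IntervalIntegrable g volume 0 1) {m : ℤ} (hm : m ≠ 0) :
    ∫ x in (0:ℝ)..1, g (m * x) = ∫ x in (0:ℝ)..1, g x := by
  have hint' : ∀ a b, IntervalIntegrable g volume a b :=
    hg.intervalIntegrable one_ne_zero (by rwa [zero_add])
  have hsum := hg.intervalIntegral_add_zsmul_eq m 0 hint'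
  simp only [zero_add, zsmul_eq_mul, mul_one] at hsum
  rw [intervalIntegral.integral_comp_mul_left g (Int.cast_ne_zero.mpr hm), mul_zero, mul_one,
    hsum, smul_eq_mul, ← mul_assoc, inv_mul_cancel₀ (Int.cast_ne_zero.mpr hm), one_mul]

lemma intervalIntegral_ite_le {a b z : ℝ} (hz : z ∈ Icc a b) (A B : ℝ) :
    ∫ t in a..b, (if t ≤ z then A else B) = (z - a) * A + (b - z) * B := by
  have hint : ∀ c d, IntervalIntegrable (fun t => if t ≤ z then A else B) volume c d :=
    intervalIntegrable_of_abs_le (Measurable.ite measurableSet_Iic measurable_const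
      measurable_const) (C := max |A| |B|) (fun t => by split_ifs <;> simp)
  rw [← intervalIntegral.integral_add_adjacent_intervals (hint a z) (hint z b)]
  have hleft : ∫ t in a..z, (if t ≤ z then A else B) = ∫ _ in a..z, A :=
    intervalIntegral.integral_congr fun t ht => by
      rw [uIcc_of_le hz.1] at ht
      simp [ht.2]
  have hright : ∫ t in z..b, (if t ≤ z then A else B) = ∫ _ in z..b, B :=
    intervalIntegral.integral_congr_ae (.of_forall fun t ht => by
      rw [uIoc_of_le hz.2] at ht
      simp [not_le.mpr ht.1])
  simp [hleft, hright]

lemma intervalIntegral_finsetSum_finsetSum {ι κ : Type*} {s : Finset ι} {t : Finset κ}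
    {g : ι → κ → ℝ → ℝ} {a b : ℝ} (hg : ∀ k j, IntervalIntegrable (g k j) volume a b) :
    ∫ x in a..b, ∑ k ∈ s, ∑ j ∈ t, g k j x = ∑ k ∈ s, ∑ j ∈ t, ∫ x in a..b, g k j x := by
  rw [intervalIntegral.integral_finsetSum fun k _ => by
    simpa only [Finset.sum_fn] using IntervalIntegrable.sum t fun j _ => hg k j]
  simp only [intervalIntegral.integral_finsetSum fun j _ => hg _ j]

noncomputable def autocorrelation (f : ℝ → ℝ) (t : ℝ) : ℝ := ∫ b in (0:ℝ)..1, f b * f (b + t)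

section Autocorrelation

variable {f : ℝ → ℝ}

lemma abs_mul_apply_le_sq {C : ℝ} (hC : ∀ t, |f t| ≤ C) (s t : ℝ) : |f s * f t| ≤ C ^ 2 := by
  rw [abs_mul, sq]
  exact mul_le_mul (hC s) (hC t) (abs_nonneg _) ((abs_nonneg _).trans (hC s))

lemma autocorrelation_zero : autocorrelation f 0 = ∫ b in (0:ℝ)..1, f b ^ 2 := by
  simp [autocorrelation, sq]

lemma periodic_autocorrelation (hf : Periodic f 1) : Periodic (autocorrelation f) 1 :=
  fun t => by simp only [autocorrelation, ← add_assoc, hf _]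

lemma intervalIntegral_mul_comp_sub_eq_autocorrelation (hf : Periodic f 1) (u v : ℝ) :
    ∫ a in (0:ℝ)..1, f (u - a) * f (v - a) = autocorrelation f (v - u) := by
  have hshift : Periodic (fun b => f b * f (b + (v - u))) 1 := fun b => by
    simp only [add_right_comm b 1, hf _]
  calc ∫ a in (0:ℝ)..1, f (u - a) * f (v - a)
      = ∫ a in (0:ℝ)..1, f (u - a) * f (u - a + (v - u)) := by simp only [sub_add_sub_cancel']
    _ = ∫ b in (u - 1)..(u - 1) + 1, f b * f (b + (v - u)) := by
      rw [intervalIntegral.integral_comp_sub_left (fun b => f b * f (b + (v - u))), sub_zero,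
        sub_add_cancel]
    _ = autocorrelation f (v - u) := by rw [hshift.intervalIntegral_add_eq, zero_add]; rfl

lemma measurable_autocorrelation (hmeas : Measurable f) : Measurable (autocorrelation f) := by
  have hprod : StronglyMeasurable (fun p : ℝ × ℝ => f p.2 * f (p.2 + p.1)) :=
    Measurable.stronglyMeasurable (by fun_prop)
  have h : autocorrelation f = fun t => ∫ b in Ioc (0:ℝ) 1, f b * f (b + t) :=
    funext fun t => intervalIntegral.integral_of_le zero_le_one
  rw [h]
  exact hprod.integral_prod_right'.measurable

lemma abs_autocorrelation_le {C : ℝ} (hC : ∀ t, |f t| ≤ C) (t : ℝ) :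
    |autocorrelation f t| ≤ C ^ 2 := by
  simpa [autocorrelation] using intervalIntegral.norm_integral_le_of_norm_le_const
    (a := 0) (b := 1) fun b _ => (Real.norm_eq_abs _).trans_le (abs_mul_apply_le_sq hC b (b + t))

lemma intervalIntegral_autocorrelation (hf : Periodic f 1)
    (hmeas : Measurable f) {C : ℝ} (hC : ∀ t, |f t| ≤ C) :
    ∫ t in (0:ℝ)..1, autocorrelation f t = (∫ t in (0:ℝ)..1, f t) ^ 2 := by
  have hshift (b : ℝ) : ∫ t in (0:ℝ)..1, f (b + t) = ∫ t in (0:ℝ)..1, f t := by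
    rw [intervalIntegral.integral_comp_add_left, add_zero, hf.intervalIntegral_add_eq, zero_add]
  simp only [autocorrelation]
  rw [intervalIntegral_integral_swap_of_abs_le (by fun_prop)
    (fun t b => abs_mul_apply_le_sq hC b (b + t))]
  simp only [intervalIntegral.integral_const_mul, hshift, intervalIntegral.integral_mul_const, sq]

lemma intervalIntegral_autocorrelation_comp_int_mul (hf : Periodic f 1)
    (hmeas : Measurable f) {C : ℝ} (hC : ∀ t, |f t| ≤ C) (m : ℤ) :
    ∫ x in (0:ℝ)..1, autocorrelation f (m * x)
      = if m = 0 then ∫ t in (0:ℝ)..1, f t ^ 2 else (∫ t in (0:ℝ)..1, f t) ^ 2 := by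
  split_ifs with hm
  · simp [hm, autocorrelation_zero]
  · rw [(periodic_autocorrelation hf).intervalIntegral_comp_int_mul
      (intervalIntegrable_of_abs_le (measurable_autocorrelation hmeas) (abs_autocorrelation_le hC)
        0 1) hm, intervalIntegral_autocorrelation hf hmeas hC]

end Autocorrelation

section Sum

variable {f : ℝ → ℝ} {ι : Type*} [Fintype ι]

lemma intervalIntegral_sq_sum_comp_sub (hf : Periodic f 1) (hmeas : Measurable f) {C : ℝ}
    (hC : ∀ t, |f t| ≤ C) (c : ι → ℝ) :
    ∫ a in (0:ℝ)..1, (∑ k, f (c k - a)) ^ 2 = ∑ k, ∑ j, autocorrelation f (c j - c k) := by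
  simp only [sq, Finset.sum_mul_sum]
  rw [intervalIntegral_finsetSum_finsetSum fun k j =>
    intervalIntegrable_of_abs_le (by fun_prop) (fun a => abs_mul_apply_le_sq hC _ _) 0 1]
  simp only [intervalIntegral_mul_comp_sub_eq_autocorrelation hf]

theorem intervalIntegral_intervalIntegral_sq_sum_comp_mul_sub (hf : Periodic f 1)
    (hmeas : Measurable f) {C : ℝ} (hC : ∀ t, |f t| ≤ C) (hmean : ∫ t in (0:ℝ)..1, f t = 0)
    {n : ι → ℤ} (hn : Injective n) :
    ∫ a in (0:ℝ)..1, ∫ x in (0:ℝ)..1, (∑ k, f (n k * x - a)) ^ 2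
      = Fintype.card ι * ∫ t in (0:ℝ)..1, f t ^ 2 := by
  have hsum_le (a x : ℝ) : |∑ k, f (n k * x - a)| ≤ Fintype.card ι * C :=
    (Finset.abs_sum_le_sum_abs _ _).trans
      ((Finset.sum_le_sum fun k _ => hC (n k * x - a)).trans_eq (by simp))
  have hsq_le (a x : ℝ) : |(∑ k, f (n k * x - a)) ^ 2| ≤ (Fintype.card ι * C) ^ 2 := by
    rw [abs_pow]
    exact pow_le_pow_left₀ (abs_nonneg _) (hsum_le a x) 2
  have hKint (m : ℤ) : IntervalIntegrable (fun x => autocorrelation f (m * x)) volume 0 1 :=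
    intervalIntegrable_of_abs_le
      ((measurable_autocorrelation hmeas).comp (measurable_id.const_mul _))
      (fun x => abs_autocorrelation_le hC _) 0 1
  calc ∫ a in (0:ℝ)..1, ∫ x in (0:ℝ)..1, (∑ k, f (n k * x - a)) ^ 2
      = ∫ x in (0:ℝ)..1, ∫ a in (0:ℝ)..1, (∑ k, f (n k * x - a)) ^ 2 :=
        intervalIntegral_integral_swap_of_abs_le (by fun_prop) hsq_le 0 1 0 1
    _ = ∫ x in (0:ℝ)..1, ∑ k, ∑ j, autocorrelation f ((n j - n k : ℤ) * x) :=
        intervalIntegral.integral_congr fun x _ => by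
          simp only [intervalIntegral_sq_sum_comp_sub hf hmeas hC, Int.cast_sub, sub_mul]
    _ = ∑ k, ∑ j, if n j = n k then ∫ t in (0:ℝ)..1, f t ^ 2 else 0 := by
        simp only [intervalIntegral_finsetSum_finsetSum fun k j => hKint (n j - n k),
          intervalIntegral_autocorrelation_comp_int_mul hf hmeas hC, hmean, sub_eq_zero,
          zero_pow two_ne_zero]
    _ = Fintype.card ι * ∫ t in (0:ℝ)..1, f t ^ 2 := by
        classical
        simp [hn.eq_iff]

end Sum

section CenteredInd

variable {z : ℝ}

lemma periodic_centeredInd (a z : ℝ) : Periodic (centeredInd a z) 1 := fun x => by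
  rw [centeredInd, centeredInd, add_sub_right_comm, Int.fract_add_one]

lemma measurable_centeredInd (a z : ℝ) : Measurable (centeredInd a z) :=
  (Measurable.ite (measurableSet_le (measurable_fract.comp (measurable_sub_const a))
    measurable_const) measurable_const measurable_const).sub_const z

lemma abs_centeredInd_le (hz : z ∈ Icc 0 1) (a x : ℝ) : |centeredInd a z x| ≤ 1 := by
  obtain ⟨hz0, hz1⟩ := hz
  rw [centeredInd, abs_le]
  split_ifs <;> constructor <;> linarith

lemma intervalIntegral_comp_centeredInd (hz : z ∈ Icc 0 1) (g : ℝ → ℝ) :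
    ∫ t in (0:ℝ)..1, g (centeredInd 0 z t) = z * g (1 - z) + (1 - z) * g (-z) := by
  have hae : ∀ᵐ t, t ∈ uIoc (0:ℝ) 1 →
      g (centeredInd 0 z t) = if t ≤ z then g (1 - z) else g (-z) := by
    filter_upwards [(countable_singleton (1:ℝ)).ae_notMem volume] with t ht1 ht
    rw [uIoc_of_le zero_le_one] at ht
    have hfract : Int.fract t = t :=
      Int.fract_eq_self.mpr ⟨ht.1.le, ht.2.lt_of_ne ht1⟩
    simp only [centeredInd, sub_zero, hfract]
    split_ifs <;> simp
  rw [intervalIntegral.integral_congr_ae hae, intervalIntegral_ite_le hz, sub_zero]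

end CenteredInd

theorem double_integral_sq_general {N : ℕ} (n : Fin N → ℕ) (hinj : Function.Injective n)
    (z : ℝ) (hz : z ∈ Ioo (0:ℝ) 1) :
    ∫ a in (0:ℝ)..1, ∫ x in (0:ℝ)..1, (∑ k, centeredInd a z (n k * x)) ^ 2
      = z * (1 - z) * N := by
  have hz' : z ∈ Icc 0 1 := Ioo_subset_Icc_self hz
  have hmean : ∫ t in (0:ℝ)..1, centeredInd 0 z t = 0 :=
    (intervalIntegral_comp_centeredInd hz' fun y => y).trans (by ring)
  have hsq : ∫ t in (0:ℝ)..1, centeredInd 0 z t ^ 2 = z * (1 - z) :=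
    (intervalIntegral_comp_centeredInd hz' (· ^ 2)).trans (by ring)
  have key := intervalIntegral_intervalIntegral_sq_sum_comp_mul_sub (periodic_centeredInd 0 z)
    (measurable_centeredInd 0 z) (abs_centeredInd_le hz' 0) hmean
    (n := fun k => (n k : ℤ)) (Nat.cast_injective.comp hinj)
  simp only [Int.cast_natCast, Fintype.card_fin, hsq] at key
  calc ∫ a in (0:ℝ)..1, ∫ x in (0:ℝ)..1, (∑ k, centeredInd a z (n k * x)) ^ 2
      = ∫ a in (0:ℝ)..1, ∫ x in (0:ℝ)..1, (∑ k, centeredInd 0 z (n k * x - a)) ^ 2 := by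
        simp only [centeredInd, sub_zero]
    _ = z * (1 - z) * N := by rw [key, mul_comm]

theorem double_integral_sq {N : ℕ} (n : Fin N → ℕ) (hinj : Function.Injective n)
    (hpos : ∀ k, 0 < n k) (z : ℝ) (hz : z ∈ Ioo (0:ℝ) 1) :
    ∫ a in (0:ℝ)..1, ∫ x in (0:ℝ)..1, (∑ k, centeredInd a z (n k * x)) ^ 2
      = z * (1 - z) * N :=
  double_integral_sq_general n hinj z hz
end

section
/- For x ∈ [0, 1/2], the maximum over a ∈ [1/3, 2/3] of the function σ²_{[0,a]}(x) = a(1-a) + (1-a)(3a-1)/3 - (1/3)∫_0^1 1_{[0,1-a]}(t) 1_{[0,3a-1]}({x-t}) dt equals (-3x² - x + 2)/6 if 0 ≤ x ≤ 1/6, equals (-24x + 25)/72 if 1/6 ≤ x ≤ 3/8, and equals 2/9 if 3/8 ≤ x ≤ 1/2. -/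
/-!
For `t ∈ (0, 1)` the fractional part `{x - t}` is `x - t` when `t < x` and `x - t + 1` when
`t > x`, so on `(0, x)` and on `(x, 1)` the integrand is the indicator of an interval, and the
overlap integral is a sum of two interval lengths. For `x ∈ [0, 1/2]` and `a ∈ [1/3, 2/3]` this
makes `σ²_{[0,a]}(x)` a piecewise concave quadratic in `a`, whose maximum is attained at
`a = (1 + x)/2`, `a = 7/12` or `a = 1/3` according to the range of `x`.
-/

open MeasureTheory Set

theorem ite_mem_eq_indicator {α : Type*} (s : Set α) [DecidablePred (· ∈ s)] :
    (fun t => if t ∈ s then (1:ℝ) else 0) = s.indicator 1 := by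
  ext t
  simp [indicator_apply]

theorem integral_ite_mem_Icc {u v : ℝ} (huv : u ≤ v) (p q : ℝ) :
    ∫ t in u..v, (if t ∈ Icc p q then (1:ℝ) else 0) = max 0 (min v q - max u p) := by
  rw [ite_mem_eq_indicator, intervalIntegral.integral_of_le huv, ← integral_Icc_eq_integral_Ioc,
    setIntegral_indicator measurableSet_Icc, Icc_inter_Icc]
  simp [max_comm]

theorem intervalIntegrable_ite_mem_Icc (u v p q : ℝ) :
    IntervalIntegrable (fun t => if t ∈ Icc p q then (1:ℝ) else 0) volume u v := by
  rw [ite_mem_eq_indicator, intervalIntegrable_iff]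
  exact (integrableOn_const measure_Ioc_lt_top.ne).indicator measurableSet_Icc

section CircleOverlap

variable {x : ℝ} (b c : ℝ)

theorem eqOn_overlap_Ioo_left (hx : x ≤ 1) :
    EqOn (fun t => (if t ∈ Icc 0 b then (1:ℝ) else 0) * (if Int.fract (x - t) ≤ c then 1 else 0))
      (fun t => if t ∈ Icc (x - c) b then 1 else 0) (Ioo 0 x) := by
  rintro t ⟨ht₀, htx⟩
  have hfract : Int.fract (x - t) = x - t := Int.fract_eq_self.2 ⟨by linarith, by linarith⟩
  simp only [hfract, mem_Icc]
  split_ifs <;> grind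

theorem eqOn_overlap_Ioo_right (hx : 0 ≤ x) :
    EqOn (fun t => (if t ∈ Icc 0 b then (1:ℝ) else 0) * (if Int.fract (x - t) ≤ c then 1 else 0))
      (fun t => if t ∈ Icc (x + 1 - c) b then 1 else 0) (Ioo x 1) := by
  rintro t ⟨hxt, ht₁⟩
  have hfract : Int.fract (x - t) = x - t + 1 := by
    rw [← Int.fract_add_one, Int.fract_eq_self]
    constructor <;> linarith
  simp only [hfract, mem_Icc]
  split_ifs <;> grind

theorem integral_overlap (hx : x ∈ Icc 0 1) :
    ∫ t in (0:ℝ)..1, (if t ∈ Icc 0 b then (1:ℝ) else 0) * (if Int.fract (x - t) ≤ c then 1 else 0)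
      = max 0 (min x b - max 0 (x - c)) + max 0 (min 1 b - max x (x + 1 - c)) := by
  obtain ⟨hx₀, hx₁⟩ := hx
  have hleft := eqOn_overlap_Ioo_left b c hx₁
  have hright := eqOn_overlap_Ioo_right b c hx₀
  rw [← uIoo_of_le hx₀] at hleft
  rw [← uIoo_of_le hx₁] at hright
  rw [← intervalIntegral.integral_add_adjacent_intervals
      ((intervalIntegrable_congr_uIoo hleft).2 (intervalIntegrable_ite_mem_Icc _ _ _ _))
      ((intervalIntegrable_congr_uIoo hright).2 (intervalIntegrable_ite_mem_Icc _ _ _ _)),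
    intervalIntegral.integral_congr_uIoo hleft, intervalIntegral.integral_congr_uIoo hright,
    integral_ite_mem_Icc hx₀, integral_ite_mem_Icc hx₁]

end CircleOverlap

theorem integral_overlap_of_mem {x a : ℝ} (hx : x ∈ Icc (0:ℝ) (1/2))
    (ha : a ∈ Icc (1/3 : ℝ) (2/3)) :
    ∫ t in (0:ℝ)..1, (if t ∈ Icc 0 (1 - a) then (1:ℝ) else 0) *
        (if Int.fract (x - t) ≤ 3 * a - 1 then 1 else 0)
      = min x (1 - a) - max 0 (x - (3 * a - 1)) + max 0 (2 * a - 1 - x) := by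
  obtain ⟨hx₀, hx₁⟩ := hx
  obtain ⟨ha₁, ha₂⟩ := ha
  have hleft : max 0 (x - (3 * a - 1)) ≤ min x (1 - a) :=
    max_le (le_min hx₀ (by linarith)) (le_min (by linarith) (by linarith))
  rw [integral_overlap _ _ ⟨hx₀, by linarith⟩, max_eq_right (sub_nonneg.2 hleft),
    min_eq_right (show 1 - a ≤ 1 by linarith),
    max_eq_right (show x ≤ x + 1 - (3 * a - 1) by linarith)]
  ring_nf

/-- `σ²_{[0,a]}(x)` with the overlap integral evaluated, valid for `x ∈ [0, 1/2]`,
`a ∈ [1/3, 2/3]`. -/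
noncomputable def sigmaSq (x a : ℝ) : ℝ :=
  (1 - a) * (6 * a - 1) / 3 -
    (min x (1 - a) - max 0 (x - (3 * a - 1)) + max 0 (2 * a - 1 - x)) / 3

section SigmaSq

variable {x : ℝ}

theorem sigmaSq_le (hx : x ∈ Icc (0:ℝ) (1/2)) {a : ℝ} (ha : a ∈ Icc (1/3 : ℝ) (2/3)) :
    sigmaSq x a ≤ if x ≤ 1/6 then (-3 * x ^ 2 - x + 2) / 6
        else if x ≤ 3/8 then (-24 * x + 25) / 72
        else 2/9 := by
  obtain ⟨hx₀, hx₁⟩ := hx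
  obtain ⟨ha₁, ha₂⟩ := ha
  simp only [sigmaSq, min_def, max_def]
  split_ifs <;> nlinarith [sq_nonneg (a - 7/12), sq_nonneg (6 * x - 1)]

theorem sigmaSq_eq_of_le {a : ℝ} (h₁ : x ≤ 1 - a) (h₂ : x ≤ 3 * a - 1) (h₃ : 2 * a - 1 ≤ x) :
    sigmaSq x a = (1 - a) * (6 * a - 1) / 3 - x / 3 := by
  rw [sigmaSq, min_eq_left h₁, max_eq_left (by linarith), max_eq_left (by linarith)]
  ring

theorem sigmaSq_one_third (hx₀ : 0 ≤ x) (hx₁ : x ≤ 2/3) : sigmaSq x (1/3) = 2/9 := by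
  rw [sigmaSq, min_eq_left (by linarith), max_eq_right (by linarith), max_eq_left (by linarith)]
  ring

theorem isGreatest_sigmaSq (hx : x ∈ Icc (0:ℝ) (1/2)) :
    IsGreatest (sigmaSq x '' Icc (1/3) (2/3))
      (if x ≤ 1/6 then (-3 * x ^ 2 - x + 2) / 6
        else if x ≤ 3/8 then (-24 * x + 25) / 72
        else 2/9) := by
  refine ⟨?_, forall_mem_image.2 fun a ha => sigmaSq_le hx ha⟩
  obtain ⟨hx₀, hx₁⟩ := hx
  split_ifs with h₁ h₂
  · refine ⟨(1 + x) / 2, ⟨by linarith, by linarith⟩, ?_⟩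
    rw [sigmaSq_eq_of_le (by linarith) (by linarith) (by linarith)]
    ring
  · refine ⟨7/12, ⟨by norm_num, by norm_num⟩, ?_⟩
    rw [sigmaSq_eq_of_le (by linarith) (by linarith) (by linarith)]
    ring
  · exact ⟨1/3, ⟨le_rfl, by norm_num⟩, sigmaSq_one_third hx₀ (by linarith)⟩

end SigmaSq

theorem max_sigma_sq (x : ℝ) (hx : x ∈ Icc (0:ℝ) (1/2)) :
    IsGreatest
      ((fun a : ℝ => a * (1 - a) + (1 - a) * (3 * a - 1) / 3 -
          (1/3) * ∫ t in (0:ℝ)..1, (if t ∈ Icc (0:ℝ) (1 - a) then (1:ℝ) else 0) *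
            (if Int.fract (x - t) ≤ 3 * a - 1 then (1:ℝ) else 0)) '' Icc (1/3 : ℝ) (2/3))
      (if x ≤ 1/6 then (-3 * x ^ 2 - x + 2) / 6
        else if x ≤ 3/8 then (-24 * x + 25) / 72
        else 2/9) := by
  convert isGreatest_sigmaSq hx using 1
  refine image_congr fun a ha => ?_
  rw [integral_overlap_of_mem hx ha, sigmaSq]
  ring
end

section
/- Let x_1, ..., x_N ∈ [0,1] and define x̄_k = x_k if x_k ≤ 1/2 and x̄_k = 1 - x_k if x_k > 1/2. Then the star-discrepancy of the points 2x̄_1, ..., 2x̄_N is at most the extremal discrepancy of x_1, ..., x_N; that is, sup_{0≤a≤1} |(1/N) Σ_{k=1}^N 1_{[1-a,1]}(2x̄_k) - a| ≤ D_N(x_1, ..., x_N). -/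
/-! The map `t ↦ 2 min(t, 1 - t)` pulls the anchored interval `[1 - a, 1]` back to the interval
`[1/2 - a/2, 1/2 + a/2]` of the same length `a`, so every term of the star discrepancy of the
folded points is one of the terms whose supremum is the extremal discrepancy of the original ones. -/

open MeasureTheory Set

theorem two_mul_fold_mem_Icc_iff (t a : ℝ) :
    2 * (if t ≤ 1/2 then t else 1 - t) ∈ Icc (1 - a) 1 ↔ t ∈ Icc (1/2 - a/2) (1/2 + a/2) := by
  simp only [mem_Icc]
  split_ifs <;> constructor <;> rintro ⟨_, _⟩ <;> constructor <;> linarith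

theorem frequency_mem_Icc {N : ℕ} (p : Fin N → Prop) [DecidablePred p] :
    (∑ k, if p k then (1:ℝ) else 0) / N ∈ Icc 0 1 := by
  rw [Finset.sum_boole]
  refine ⟨by positivity, div_le_one_of_le₀ ?_ N.cast_nonneg⟩
  exact_mod_cast (Finset.card_filter_le _ _).trans_eq (Finset.card_fin N)

theorem abs_frequency_sub_le_discrepancy {N : ℕ} (x : Fin N → ℝ) {a b : ℝ}
    (ha : 0 ≤ a) (hab : a ≤ b) (hb : b ≤ 1) :
    |(∑ k, if x k ∈ Icc a b then (1:ℝ) else 0) / N - (b - a)| ≤ discrepancy x := by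
  have hbdd : BddAbove (range fun p : {p : ℝ × ℝ // 0 ≤ p.1 ∧ p.1 ≤ p.2 ∧ p.2 ≤ 1} =>
      |(∑ k, if x k ∈ Icc p.val.1 p.val.2 then (1:ℝ) else 0) / N - (p.val.2 - p.val.1)|) := by
    refine ⟨1, ?_⟩
    rintro _ ⟨⟨⟨a', b'⟩, ha', hab', hb'⟩, rfl⟩
    obtain ⟨h0, h1⟩ := frequency_mem_Icc fun k => x k ∈ Icc a' b'
    exact abs_sub_le_iff.mpr ⟨by linarith, by linarith⟩
  exact le_ciSup hbdd ⟨(a, b), ha, hab, hb⟩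

theorem folding_discrepancy_general {N : ℕ} (x : Fin N → ℝ) :
    (⨆ a : Icc (0:ℝ) 1,
        |(∑ k, if 2 * (if x k ≤ 1/2 then x k else 1 - x k) ∈ Icc (1 - (a:ℝ)) 1
            then (1:ℝ) else 0) / N - (a:ℝ)|)
      ≤ discrepancy x := by
  refine ciSup_le fun ⟨a, ha0, ha1⟩ => ?_
  have h := abs_frequency_sub_le_discrepancy x (a := 1/2 - a/2) (b := 1/2 + a/2)
    (by linarith) (by linarith) (by linarith)
  simp_rw [two_mul_fold_mem_Icc_iff]
  rwa [show 1/2 + a/2 - (1/2 - a/2) = a by ring] at h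

theorem folding_discrepancy {N : ℕ} (hN : 0 < N) (x : Fin N → ℝ)
    (hx : ∀ k, x k ∈ Icc (0:ℝ) 1) :
    (⨆ a : Icc (0:ℝ) 1,
        |(∑ k, if 2 * (if x k ≤ 1/2 then x k else 1 - x k) ∈ Icc (1 - (a:ℝ)) 1
            then (1:ℝ) else 0) / N - (a:ℝ)|)
      ≤ discrepancy x :=
  folding_discrepancy_general x
end
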